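/- In the tree reduced instance, for every A ⊆ {1, …, m}, setting W = {v^(i)_1 : i ∈ A}, the vote counts among the vertices of H_W are: candidate c receives m + 2 − |A| votes; candidate d receives m + 1 − ℓ votes; and each candidate e ∈ U receives m + 2 − |A| − |{i ∈ A : e ∈ S_i}| votes. -/

import Mathlib

/-- Vertices of the tree reduced instance: for each `i ∈ [m]`, the path `P^(i)` has
vertices `v i j` (`j : Fin 3`, the vertices `v^(i)_1, v^(i)_2, v^(i)_3`), `u i k`
(`k : Fin (3ℓ)`, the vertices `u^(i)_1, …, u^(i)_{3ℓ}`) and `w i`; the path `P^#` has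
vertices `zh 0, zh 1`; the path `P^*` has vertices `zs t` for `t : Fin (m + 1 - ℓ)`
(all 0-indexed). -/
inductive VT (ℓ m : ℕ) : Type
  | v (i : Fin m) (j : Fin 3) : VT ℓ m
  | u (i : Fin m) (k : Fin (3 * ℓ)) : VT ℓ m
  | w (i : Fin m) : VT ℓ m
  | zh (j : Fin 2) : VT ℓ m
  | zs (t : Fin (m + 1 - ℓ)) : VT ℓ m
  deriving DecidableEq

/-- The candidate set `C = U ∪ {c, d}`, where `U = {1, …, 3ℓ}`. -/
inductive CandT (ℓ : ℕ) : Type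
  | elem (k : Fin (3 * ℓ)) : CandT ℓ
  | c : CandT ℓ
  | d : CandT ℓ
  deriving DecidableEq

/-- Base edge relation of the tree reduced instance: consecutive vertices of each path
`P^(i) = (v^(i)_1, v^(i)_2, v^(i)_3, u^(i)_1, …, u^(i)_{3ℓ}, w^(i))`, of
`P^# = (z#_1, z#_2)` and of `P^* = (z*_1, …, z*_{m+1−ℓ})` are adjacent, and the last
vertex `z*_{m+1−ℓ}` of `P^*` is joined to each head `v^(i)_1` and to `z#_1`. -/
def baseRelT (ℓ m : ℕ) : VT ℓ m → VT ℓ m → Prop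
  | .v i j, .v i' j' => i = i' ∧ (j : ℕ) + 1 = (j' : ℕ)
  | .v i j, .u i' k => i = i' ∧ (j : ℕ) = 2 ∧ (k : ℕ) = 0
  | .u i k, .u i' k' => i = i' ∧ (k : ℕ) + 1 = (k' : ℕ)
  | .u i k, .w i' => i = i' ∧ (k : ℕ) + 1 = 3 * ℓ
  | .zh j, .zh j' => (j : ℕ) + 1 = (j' : ℕ)
  | .zs t, .zs t' => (t : ℕ) + 1 = (t' : ℕ)
  | .zs t, .v _ j => (t : ℕ) + 1 = m + 1 - ℓ ∧ (j : ℕ) = 0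
  | .zs t, .zh j => (t : ℕ) + 1 = m + 1 - ℓ ∧ (j : ℕ) = 0
  | _, _ => False

/-- The tree of the tree reduced instance. -/
def GT (ℓ m : ℕ) : SimpleGraph (VT ℓ m) := SimpleGraph.fromRel (baseRelT ℓ m)

/-- The voting function, given an enumeration `e i 0, e i 1, e i 2` of the elements of
each set `S_i`: `v^(i)_j` votes for `e^(i)_j`, `u^(i)_k` votes for `k`, the `w^(i)` and
`z#`'s vote for `c`, and the `z*`'s vote for `d`. -/
def τT (ℓ m : ℕ) (e : Fin m → Fin 3 → Fin (3 * ℓ)) : VT ℓ m → CandT ℓ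
  | .v i j => CandT.elem (e i j)
  | .u _ k => CandT.elem k
  | .w _ => CandT.c
  | .zh _ => CandT.c
  | .zs _ => CandT.d

/-- The set `S_i`, recovered from the enumeration of its elements. -/
def SetT (ℓ m : ℕ) (e : Fin m → Fin 3 → Fin (3 * ℓ)) (i : Fin m) :
    Finset (Fin (3 * ℓ)) :=
  Finset.image (e i) Finset.univ

/-- The distinguished vertex `x = z*_1`. -/
def xT (ℓ m : ℕ) (h : 0 < m + 1 - ℓ) : VT ℓ m := VT.zs ⟨0, h⟩

/-- `HW G W x`: the set of vertices reachable from `x` in the subgraph of `G` induced on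
the complement of `W` (each step of a connecting walk must avoid `W`). -/
def HW {V : Type*} (G : SimpleGraph V) (W : Set V) (x : V) : Set V :=
  {z | Relation.ReflTransGen (fun a b => G.Adj a b ∧ a ∉ W ∧ b ∉ W) x z}

/-- Candidate `c` uniquely wins the election restricted to `W`: every other candidate
gets strictly fewer votes among the voters of `H_W`. -/
def winsT (ℓ m : ℕ) (e : Fin m → Fin 3 → Fin (3 * ℓ)) (x : VT ℓ m)
    (W : Set (VT ℓ m)) : Prop :=
  ∀ y : CandT ℓ, y ≠ CandT.c →
    (HW (GT ℓ m) W x ∩ τT ℓ m e ⁻¹' {y}).ncard <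
      (HW (GT ℓ m) W x ∩ τT ℓ m e ⁻¹' {CandT.c}).ncard

section Aux

variable {ℓ m : ℕ}

/-- The invariant: vertices reachable after deleting the heads indexed by `A`. -/
def goodT (A : Finset (Fin m)) : VT ℓ m → Prop
  | .v i _ => i ∉ A
  | .u i _ => i ∉ A
  | .w i => i ∉ A
  | .zh _ => True
  | .zs _ => True

lemma WT_mem (A : Finset (Fin m)) (z : VT ℓ m) :
    z ∈ {z : VT ℓ m | ∃ i ∈ A, z = VT.v i 0} ↔
      ∃ i j, z = VT.v i j ∧ i ∈ A ∧ j = 0 := by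
  constructor
  · rintro ⟨i, hi, rfl⟩; exact ⟨i, 0, rfl, hi, rfl⟩
  · rintro ⟨i, j, rfl, hi, rfl⟩; exact ⟨i, hi, rfl⟩

lemma good_of_rel (A : Finset (Fin m)) {a b : VT ℓ m}
    (ha : goodT A a) (hadj : (GT ℓ m).Adj a b)
    (hb : b ∉ {z : VT ℓ m | ∃ i ∈ A, z = VT.v i 0}) : goodT A b := by
  rw [WT_mem] at hb
  push_neg at hb
  obtain ⟨-, h | h⟩ := hadj <;>
    cases a <;> cases b <;> simp_all [baseRelT, goodT]

section Reach

variable (A : Finset (Fin m))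

def stepT (A : Finset (Fin m)) (a b : VT ℓ m) : Prop :=
  (GT ℓ m).Adj a b ∧ a ∉ ({z : VT ℓ m | ∃ i ∈ A, z = VT.v i 0}) ∧
    b ∉ ({z : VT ℓ m | ∃ i ∈ A, z = VT.v i 0})

lemma notW_u (i : Fin m) (k : Fin (3 * ℓ)) : VT.u i k ∉ {z : VT ℓ m | ∃ i ∈ A, z = VT.v i 0} := by
  rw [WT_mem]; push_neg; intro i' j' h; cases h

lemma notW_w (i : Fin m) : VT.w (ℓ := ℓ) i ∉ {z : VT ℓ m | ∃ i ∈ A, z = VT.v i 0} := by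
  rw [WT_mem]; push_neg; intro i' j' h; cases h

lemma notW_zh (j : Fin 2) : VT.zh (ℓ := ℓ) (m := m) j ∉ {z : VT ℓ m | ∃ i ∈ A, z = VT.v i 0} := by
  rw [WT_mem]; push_neg; intro i' j' h; cases h

lemma notW_zs (t : Fin (m + 1 - ℓ)) : VT.zs (ℓ := ℓ) t ∉ {z : VT ℓ m | ∃ i ∈ A, z = VT.v i 0} := by
  rw [WT_mem]; push_neg; intro i' j' h; cases h

lemma notW_v {i : Fin m} (hi : i ∉ A) (j : Fin 3) : VT.v (ℓ := ℓ) i j ∉ {z : VT ℓ m | ∃ i ∈ A, z = VT.v i 0} := by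
  rw [WT_mem]; push_neg; rintro i' j' h
  obtain ⟨rfl, rfl⟩ := VT.v.inj h
  intro h'; exact absurd h' hi

lemma adj_of_base {a b : VT ℓ m} (hne : a ≠ b) (h : baseRelT ℓ m a b) :
    (GT ℓ m).Adj a b := by
  rw [GT, SimpleGraph.fromRel_adj]
  exact ⟨hne, Or.inl h⟩

lemma reach_zs (h0 : 0 < m + 1 - ℓ) (t : Fin (m + 1 - ℓ)) :
    Relation.ReflTransGen (stepT A) (VT.zs ⟨0, h0⟩) (VT.zs t) := by
  obtain ⟨t, ht⟩ := t
  induction t with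
  | zero => exact Relation.ReflTransGen.refl
  | succ n ih =>
    refine (ih (by omega)).tail ?_
    refine ⟨adj_of_base ?_ ?_, notW_zs A _, notW_zs A _⟩
    · simp [Fin.ext_iff]
    · simp [baseRelT]

lemma reach_last (h0 : 0 < m + 1 - ℓ) :
    Relation.ReflTransGen (stepT A) (VT.zs ⟨0, h0⟩) (VT.zs ⟨m - ℓ, by omega⟩) :=
  reach_zs A h0 _

lemma reach_zh (hm : ℓ ≤ m) (h0 : 0 < m + 1 - ℓ) (j : Fin 2) :
    Relation.ReflTransGen (stepT A) (VT.zs ⟨0, h0⟩) (VT.zh j) := by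
  have h1 : Relation.ReflTransGen (stepT A) (VT.zs ⟨0, h0⟩) (VT.zh (0 : Fin 2)) := by
    refine (reach_last A h0).tail ?_
    refine ⟨adj_of_base (by simp) ?_, notW_zs A _, notW_zh A _⟩
    simp [baseRelT]; omega
  obtain ⟨j, hj⟩ := j
  interval_cases j
  · exact h1
  · refine h1.tail ⟨adj_of_base (by simp [Fin.ext_iff]) ?_, notW_zh A _, notW_zh A _⟩
    simp [baseRelT]

lemma reach_v (hm : ℓ ≤ m) (h0 : 0 < m + 1 - ℓ) {i : Fin m} (hi : i ∉ A) (j : Fin 3) :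
    Relation.ReflTransGen (stepT A) (VT.zs ⟨0, h0⟩) (VT.v i j) := by
  have h1 : Relation.ReflTransGen (stepT A) (VT.zs ⟨0, h0⟩) (VT.v i 0) := by
    refine (reach_last A h0).tail ?_
    refine ⟨adj_of_base (by simp) ?_, notW_zs A _, notW_v A hi _⟩
    simp [baseRelT]; omega
  obtain ⟨j, hj⟩ := j
  induction j with
  | zero => exact h1
  | succ n ih =>
    refine (ih (by omega)).tail ?_
    refine ⟨adj_of_base ?_ ?_, notW_v A hi _, notW_v A hi _⟩
    · simp [Fin.ext_iff]
    · simp [baseRelT]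

lemma reach_u (hm : ℓ ≤ m) (h0 : 0 < m + 1 - ℓ) {i : Fin m} (hi : i ∉ A) (k : Fin (3 * ℓ)) :
    Relation.ReflTransGen (stepT A) (VT.zs ⟨0, h0⟩) (VT.u i k) := by
  obtain ⟨k, hk⟩ := k
  induction k with
  | zero =>
    refine (reach_v A hm h0 hi ⟨2, by omega⟩).tail ?_
    refine ⟨adj_of_base (by simp) ?_, notW_v A hi _, notW_u A _ _⟩
    simp [baseRelT]
  | succ n ih =>
    refine (ih (by omega)).tail ?_
    refine ⟨adj_of_base ?_ ?_, notW_u A _ _, notW_u A _ _⟩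
    · simp [Fin.ext_iff]
    · simp [baseRelT]

lemma reach_w (hℓ : 1 ≤ ℓ) (hm : ℓ ≤ m) (h0 : 0 < m + 1 - ℓ) {i : Fin m} (hi : i ∉ A) :
    Relation.ReflTransGen (stepT A) (VT.zs ⟨0, h0⟩) (VT.w i) := by
  refine (reach_u A hm h0 hi ⟨3 * ℓ - 1, by omega⟩).tail ?_
  refine ⟨adj_of_base (by simp) ?_, notW_u A _ _, notW_w A _⟩
  simp [baseRelT]; omega

lemma HW_eq (hℓ : 1 ≤ ℓ) (hm : ℓ ≤ m) (h0 : 0 < m + 1 - ℓ) :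
    HW (GT ℓ m) {z : VT ℓ m | ∃ i ∈ A, z = VT.v i 0} (xT ℓ m h0) = {z : VT ℓ m | goodT A z} := by
  ext z
  constructor
  · intro hz
    induction hz with
    | refl => trivial
    | tail _ hstep ih => exact good_of_rel A ih hstep.1 hstep.2.2
  · intro hz
    cases z with
    | v i j => exact reach_v A hm h0 hz j
    | u i k => exact reach_u A hm h0 hz k
    | w i => exact reach_w A hℓ hm h0 hz
    | zh j => exact reach_zh A hm h0 j
    | zs t => exact reach_zs A h0 t

end Reach

end Aux


/-- Vote counts after deleting the heads `v^(i)_1` for `i ∈ A`: candidate `c` gets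
`m + 2 − |A|` votes, candidate `d` gets `m + 1 − ℓ` votes, and each `e ∈ U` gets
`m + 2 − |A| − |{i ∈ A : e ∈ S_i}|` votes. -/
theorem tree_vote_counts_after_deleting_heads (ℓ m : ℕ) (hℓ : 1 ≤ ℓ) (hm : ℓ ≤ m)
    (e : Fin m → Fin 3 → Fin (3 * ℓ))
    (hinj : ∀ i, Function.Injective (e i))
    (hcov : Finset.univ.biUnion (SetT ℓ m e) = Finset.univ)
    (htwo : ∀ k : Fin (3 * ℓ),
      (Finset.univ.filter fun i => k ∈ SetT ℓ m e i).card = 2)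
    (A : Finset (Fin m)) :
    (HW (GT ℓ m) {z | ∃ i ∈ A, z = VT.v i 0} (xT ℓ m (by omega)) ∩
        τT ℓ m e ⁻¹' {CandT.c}).ncard = m + 2 - A.card ∧
    (HW (GT ℓ m) {z | ∃ i ∈ A, z = VT.v i 0} (xT ℓ m (by omega)) ∩
        τT ℓ m e ⁻¹' {CandT.d}).ncard = m + 1 - ℓ ∧
    ∀ k : Fin (3 * ℓ),
      (HW (GT ℓ m) {z | ∃ i ∈ A, z = VT.v i 0} (xT ℓ m (by omega)) ∩
          τT ℓ m e ⁻¹' {CandT.elem k}).ncard =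
        m + 2 - A.card - (A.filter fun i => k ∈ SetT ℓ m e i).card := by
  classical
  have hA : A.card ≤ m := by
    have := Finset.card_le_card (Finset.subset_univ A)
    simpa using this
  have h0 : 0 < m + 1 - ℓ := by omega
  simp only [HW_eq A hℓ hm]
  refine ⟨?_, ?_, ?_⟩
  · -- candidate c
    have hc : {z : VT ℓ m | goodT A z} ∩ τT ℓ m e ⁻¹' {CandT.c}
        = ↑(Aᶜ.image (VT.w (ℓ := ℓ)) ∪ {VT.zh 0, VT.zh 1}) := by
      ext z
      cases z with
      | v i j => simp [goodT, τT]
      | u i k => simp [goodT, τT]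
      | w i => simp [goodT, τT]
      | zh j => fin_cases j <;> simp [goodT, τT]
      | zs t => simp [goodT, τT]
    rw [hc, Set.ncard_coe_finset]
    rw [Finset.card_union_of_disjoint (by simp [Finset.disjoint_left])]
    rw [Finset.card_image_of_injective _ (fun a b h => VT.w.inj h : Function.Injective (VT.w (ℓ := ℓ)))]
    have h2 : ({VT.zh 0, VT.zh 1} : Finset (VT ℓ m)).card = 2 := by
      rw [Finset.card_insert_of_notMem (by simp), Finset.card_singleton]
    rw [h2, Finset.card_compl]
    simp only [Fintype.card_fin]
    omega
  · -- candidate d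
    have hd : {z : VT ℓ m | goodT A z} ∩ τT ℓ m e ⁻¹' {CandT.d}
        = ↑(Finset.univ.image (VT.zs (ℓ := ℓ) (m := m))) := by
      ext z
      cases z with
      | v i j => simp [goodT, τT]
      | u i k => simp [goodT, τT]
      | w i => simp [goodT, τT]
      | zh j => simp [goodT, τT]
      | zs t => simp [goodT, τT]
    rw [hd, Set.ncard_coe_finset,
      Finset.card_image_of_injective _ (fun a b h => VT.zs.inj h)]
    simp
  · -- candidates in U
    intro k
    set P : Finset (Fin m × Fin 3) :=
      Finset.univ.filter fun p : Fin m × Fin 3 => p.1 ∉ A ∧ e p.1 p.2 = k with hP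
    have hk : {z : VT ℓ m | goodT A z} ∩ τT ℓ m e ⁻¹' {CandT.elem k}
        = ↑((Aᶜ.image fun i => VT.u i k) ∪ (P.image fun p => VT.v p.1 p.2)) := by
      ext z
      cases z with
      | v i j => simp [goodT, τT, hP]
      | u i k' => simp [goodT, τT, hP]; aesop
      | w i => simp [goodT, τT, hP]
      | zh j => simp [goodT, τT, hP]
      | zs t => simp [goodT, τT, hP]
    rw [hk, Set.ncard_coe_finset]
    rw [Finset.card_union_of_disjoint (by simp [Finset.disjoint_left])]
    rw [Finset.card_image_of_injective _
      (fun a b h => (VT.u.inj h).1 : Function.Injective fun i => VT.u (ℓ := ℓ) i k)]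
    rw [Finset.card_image_of_injective _
      (fun p q h => Prod.ext (VT.v.inj h).1 (VT.v.inj h).2 :
        Function.Injective fun p : Fin m × Fin 3 => VT.v (ℓ := ℓ) p.1 p.2)]
    rw [Finset.card_compl]
    simp only [Fintype.card_fin]
    have hPcard : P.card = (Finset.univ.filter fun i => i ∉ A ∧ k ∈ SetT ℓ m e i).card := by
      rw [← Finset.card_image_of_injOn (f := Prod.fst) ?inj]
      case inj =>
        intro p hp q hq hpq
        simp only [hP, Finset.coe_filter, Set.mem_setOf_eq, Finset.mem_univ,
          true_and] at hp hq
        obtain ⟨p1, p2⟩ := p; obtain ⟨q1, q2⟩ := q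
        obtain rfl : p1 = q1 := hpq
        exact Prod.ext rfl (hinj p1 (hp.2.trans hq.2.symm))
      congr 1
      ext i
      simp only [hP, Finset.mem_image, Finset.mem_filter, Finset.mem_univ, true_and,
        SetT, Prod.exists]
      constructor
      · rintro ⟨a, b, ⟨h1, h2⟩, rfl⟩; exact ⟨h1, b, h2⟩
      · rintro ⟨h1, b, h2⟩
        exact ⟨i, b, ⟨h1, h2⟩, rfl⟩
    have e1 : (A.filter fun i => k ∈ SetT ℓ m e i).card
        + (Finset.univ.filter fun i => i ∉ A ∧ k ∈ SetT ℓ m e i).card = 2 := by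
      rw [← htwo k, ← Finset.card_filter_add_card_filter_not
        (s := Finset.univ.filter fun i => k ∈ SetT ℓ m e i) (p := fun i => i ∈ A)]
      congr 1
      · congr 1; ext i; simp; tauto
      · congr 1; ext i; simp; tauto
    omega
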